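/- Let V be a fixed finite vertex set. The renormalized resistance distance RD is a metric on the set of simple graphs with vertex set V: for all simple graphs G¹, G², G³ on V one has RD(G¹,G²) ≥ 0 with RD(G¹,G²) = 0 if and only if G¹ = G², RD(G¹,G²) = RD(G²,G¹), and RD(G¹,G³) ≤ RD(G¹,G²) + RD(G²,G³). -/

import Mathlib

open scoped Classical BigOperators ENNReal
open Filter MeasureTheory Topology Asymptotics ProbabilityTheory

noncomputable section

namespace RP

variable {V : Type*} [Fintype V]

/-- A unit flow from `u` to `v` on the graph `G`. -/
def IsUnitFlow (G : SimpleGraph V) (u v : V) (f : V → V → ℝ) : Prop :=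
  (∀ a b, f a b = - f b a) ∧
  (∀ a b, ¬ G.Adj a b → f a b = 0) ∧
  (∀ w, ∑ x, f w x = (if w = u then (1:ℝ) else 0) - (if w = v then (1:ℝ) else 0))

/-- Energy of a flow (each undirected edge counted once). -/
def energy (f : V → V → ℝ) : ℝ := (1/2) * ∑ a, ∑ b, (f a b)^2

/-- Effective resistance as infimum of energies of unit flows, `∞` if disconnected. -/
def effRes (G : SimpleGraph V) (u v : V) : ℝ≥0∞ :=
  sInf {x : ℝ≥0∞ | ∃ f, IsUnitFlow G u v f ∧ x = ENNReal.ofReal (energy f)}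

/-- Renormalized effective resistance `R̂/(R̂+1)`, equal to 1 when disconnected. -/
def renRes (G : SimpleGraph V) (u v : V) : ℝ :=
  if effRes G u v = ⊤ then 1
  else (effRes G u v).toReal / ((effRes G u v).toReal + 1)

/-- Renormalized resistance distance, summed over pairs `u < v` in `S`. -/
def RDon [LinearOrder V] (S : Finset V) (G₁ G₂ : SimpleGraph V) : ℝ :=
  ∑ p ∈ (S ×ˢ S).filter (fun p => p.1 < p.2),
    |renRes G₁ p.1 p.2 - renRes G₂ p.1 p.2|

/-- Renormalized resistance distance on a full common vertex set. -/
def RD [LinearOrder V] (G₁ G₂ : SimpleGraph V) : ℝ := RDon Finset.univ G₁ G₂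

end RP

/-!
Thomson's principle identifies `effRes G u v` with `φ u - φ v` for any potential `φ` solving
`L φ = δ_u - δ_v`, `L` the graph Laplacian, and with `∞` exactly when `u` and `v` lie in different
components. By reciprocity of potentials, the resistances determine every difference `ψ x - ψ y`
within a component of a potential `ψ`, so two graphs with the same resistances share all their
potentials, and then their Laplacians coincide. As `t ↦ t / (t + 1)` is injective, `RD G₁ G₂ = 0`
forces equal resistances; the other metric axioms hold termwise.
-/

namespace RP

open Matrix

variable {V : Type*}

def dipole (u v : V) : V → ℝ := Pi.single u 1 - Pi.single v 1

lemma dipole_add_dipole (u v w : V) : dipole u v + dipole v w = dipole u w := by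
  simp [dipole]

lemma neg_dipole (u v : V) : -dipole u v = dipole v u := by
  simp [dipole]

lemma dipole_self (u : V) : dipole u u = 0 := by
  simp [dipole]

section Fintype

variable [Fintype V]

lemma dotProduct_dipole (x : V → ℝ) (u v : V) : x ⬝ᵥ dipole u v = x u - x v := by
  simp [dipole, dotProduct_sub]

namespace IsUnitFlow

variable {G : SimpleGraph V} {u v : V} {f : V → V → ℝ}

lemma sum_apply (hf : IsUnitFlow G u v f) (w : V) : ∑ x, f w x = dipole u v w := by
  rw [hf.2.2 w]
  simp [dipole, Pi.single_apply]

lemma sum_mul_sub (hf : IsUnitFlow G u v f) (φ : V → ℝ) :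
    ∑ a, ∑ b, f a b * (φ a - φ b) = 2 * (φ u - φ v) := by
  have hswap : ∑ a, ∑ b, f a b * φ b = -∑ a, ∑ b, f a b * φ a := by
    rw [Finset.sum_comm, ← Finset.sum_neg_distrib]
    exact Finset.sum_congr rfl fun b _ => by
      rw [← Finset.sum_neg_distrib]
      exact Finset.sum_congr rfl fun a _ => by rw [hf.1 a b, neg_mul]
  have hdiv : ∑ a, ∑ b, f a b * φ a = φ u - φ v := by
    simp only [← Finset.sum_mul, hf.sum_apply, mul_comm, ← dotProduct_dipole]
    rfl
  simp only [mul_sub, Finset.sum_sub_distrib, hswap, hdiv]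
  ring

/-- A unit flow crosses no cut: test it against the indicator of the component of `u`. -/
lemma reachable (hf : IsUnitFlow G u v f) : G.Reachable u v := by
  let φ : V → ℝ := fun w => if G.Reachable u w then 1 else 0
  have hzero : ∀ a b, f a b * (φ a - φ b) = 0 := by
    intro a b
    by_cases hab : G.Adj a b
    · have : G.Reachable u a ↔ G.Reachable u b := ⟨fun h => h.trans hab.reachable,
        fun h => h.trans hab.symm.reachable⟩
      simp [φ, this]
    · simp [hf.2.1 a b hab]
  have h := hf.sum_mul_sub φ
  simp only [hzero, Finset.sum_const_zero, φ, SimpleGraph.Reachable.refl, if_true] at h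
  by_contra hv
  simp [hv] at h

end IsUnitFlow

variable (G : SimpleGraph V)

def potentialFlow (φ : V → ℝ) (a b : V) : ℝ := if G.Adj a b then φ a - φ b else 0

lemma sum_potentialFlow (φ : V → ℝ) (a : V) :
    ∑ b, potentialFlow G φ a b = (G.lapMatrix ℝ *ᵥ φ) a := by
  simp only [potentialFlow]
  rw [SimpleGraph.lapMatrix_mulVec_apply, ← Finset.sum_filter,
    ← SimpleGraph.neighborFinset_eq_filter, Finset.sum_sub_distrib, Finset.sum_const,
    SimpleGraph.card_neighborFinset_eq_degree, nsmul_eq_mul]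

variable {G} {u v : V} {φ : V → ℝ}

lemma isUnitFlow_potentialFlow (hφ : G.lapMatrix ℝ *ᵥ φ = dipole u v) :
    IsUnitFlow G u v (potentialFlow G φ) := by
  refine ⟨fun a b => ?_, fun a b hab => if_neg hab, fun w => ?_⟩
  · simp only [potentialFlow, G.adj_comm b a]
    split_ifs <;> ring
  · simp [sum_potentialFlow, hφ, dipole, Pi.single_apply]

lemma reachable_of_lapMatrix_mulVec_eq_dipole (hφ : G.lapMatrix ℝ *ᵥ φ = dipole u v) :
    G.Reachable u v :=
  (isUnitFlow_potentialFlow hφ).reachable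

lemma energy_nonneg (f : V → V → ℝ) : 0 ≤ energy f := by
  unfold energy
  positivity

lemma energy_potentialFlow (hφ : G.lapMatrix ℝ *ᵥ φ = dipole u v) :
    energy (potentialFlow G φ) = φ u - φ v := by
  have hsq : ∀ a b, potentialFlow G φ a b ^ 2 = potentialFlow G φ a b * (φ a - φ b) := by
    intro a b
    unfold potentialFlow
    split_ifs <;> ring
  rw [energy]
  simp only [hsq, (isUnitFlow_potentialFlow hφ).sum_mul_sub]
  ring

/-- Thomson's principle: expand `0 ≤ ∑ (f - ∇φ)²`; the cross term is `2 (φ u - φ v)` for every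
unit flow `f`. -/
lemma energy_potentialFlow_le (hφ : G.lapMatrix ℝ *ᵥ φ = dipole u v) {f : V → V → ℝ}
    (hf : IsUnitFlow G u v f) : energy (potentialFlow G φ) ≤ energy f := by
  have hpt : ∀ a b, 2 * (f a b * (φ a - φ b)) - potentialFlow G φ a b ^ 2 ≤ f a b ^ 2 := by
    intro a b
    unfold potentialFlow
    split_ifs with hab
    · nlinarith [sq_nonneg (f a b - (φ a - φ b))]
    · simp [hf.2.1 a b hab]
  have hsum := Finset.sum_le_sum fun a (_ : a ∈ Finset.univ) =>
    Finset.sum_le_sum fun b (_ : b ∈ Finset.univ) => hpt a b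
  simp only [Finset.sum_sub_distrib, ← Finset.mul_sum, hf.sum_mul_sub] at hsum
  have hE := energy_potentialFlow hφ
  unfold energy at hE ⊢
  linarith

lemma sub_nonneg_of_lapMatrix_mulVec_eq_dipole (hφ : G.lapMatrix ℝ *ᵥ φ = dipole u v) :
    0 ≤ φ u - φ v :=
  energy_potentialFlow hφ ▸ energy_nonneg _

lemma effRes_eq_ofReal (hφ : G.lapMatrix ℝ *ᵥ φ = dipole u v) :
    effRes G u v = ENNReal.ofReal (φ u - φ v) := by
  refine IsLeast.csInf_eq ⟨⟨potentialFlow G φ, isUnitFlow_potentialFlow hφ, ?_⟩, ?_⟩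
  · rw [energy_potentialFlow hφ]
  · rintro x ⟨f, hf, rfl⟩
    rw [← energy_potentialFlow hφ]
    exact ENNReal.ofReal_le_ofReal (energy_potentialFlow_le hφ hf)

lemma toReal_effRes (hφ : G.lapMatrix ℝ *ᵥ φ = dipole u v) :
    (effRes G u v).toReal = φ u - φ v := by
  rw [effRes_eq_ofReal hφ, ENNReal.toReal_ofReal (sub_nonneg_of_lapMatrix_mulVec_eq_dipole hφ)]

variable (G) in
lemma dotProduct_lapMatrix_mulVec (x y : V → ℝ) :
    x ⬝ᵥ (G.lapMatrix ℝ *ᵥ y) = (G.lapMatrix ℝ *ᵥ x) ⬝ᵥ y := by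
  rw [dotProduct_mulVec, ← mulVec_transpose, (G.isSymm_lapMatrix (R := ℝ)).eq]

/-- `range L = (ker L)ᗮ` because `L` is symmetric. -/
lemma exists_lapMatrix_mulVec_eq {x : V → ℝ} (hx : ∀ k, G.lapMatrix ℝ *ᵥ k = 0 → k ⬝ᵥ x = 0) :
    ∃ φ, G.lapMatrix ℝ *ᵥ φ = x := by
  let T := Matrix.toEuclideanLin (G.lapMatrix ℝ)
  have hT : T.IsSymmetric := Matrix.isSymmetric_toEuclideanLin_iff.2 (G.isHermitian_lapMatrix ℝ)
  have hrange : WithLp.toLp 2 x ∈ LinearMap.range T := by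
    rw [← Submodule.orthogonal_orthogonal (LinearMap.range T), hT.orthogonal_range,
      Submodule.mem_orthogonal]
    intro k hk
    have := hx k.ofLp (congrArg WithLp.ofLp hk)
    simpa [EuclideanSpace.inner_eq_star_dotProduct, dotProduct_comm] using this
  obtain ⟨φ, hφ⟩ := hrange
  exact ⟨φ.ofLp, congrArg WithLp.ofLp hφ⟩

lemma exists_lapMatrix_mulVec_eq_dipole (h : G.Reachable u v) :
    ∃ φ, G.lapMatrix ℝ *ᵥ φ = dipole u v := by
  refine exists_lapMatrix_mulVec_eq fun k hk => ?_
  rw [dotProduct_dipole, sub_eq_zero]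
  exact SimpleGraph.lapMatrix_mulVec_eq_zero_iff_forall_reachable G |>.1 hk u v h

lemma sub_eq_sub_of_lapMatrix_mulVec_eq_dipole (hφ : G.lapMatrix ℝ *ᵥ φ = dipole u v)
    {ψ : V → ℝ} {a b : V} (hψ : G.lapMatrix ℝ *ᵥ ψ = dipole a b) :
    φ a - φ b = ψ u - ψ v := by
  rw [← dotProduct_dipole, ← dotProduct_dipole, ← hψ, ← hφ, dotProduct_lapMatrix_mulVec,
    dotProduct_comm]

variable (G) in
lemma effRes_eq_top_iff (u v : V) : effRes G u v = ⊤ ↔ ¬ G.Reachable u v := by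
  refine ⟨fun htop h => ?_, fun h => ?_⟩
  · obtain ⟨φ, hφ⟩ := exists_lapMatrix_mulVec_eq_dipole h
    exact ENNReal.ofReal_ne_top (effRes_eq_ofReal hφ ▸ htop)
  · rw [effRes, sInf_eq_top]
    rintro _ ⟨f, hf, -⟩
    exact absurd hf.reachable h

variable (G) in
lemma effRes_comm (u v : V) : effRes G u v = effRes G v u := by
  by_cases h : G.Reachable u v
  · obtain ⟨φ, hφ⟩ := exists_lapMatrix_mulVec_eq_dipole h
    have hφ' : G.lapMatrix ℝ *ᵥ (-φ) = dipole v u := by rw [mulVec_neg, hφ, neg_dipole]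
    rw [effRes_eq_ofReal hφ, effRes_eq_ofReal hφ', Pi.neg_apply, Pi.neg_apply, neg_sub_neg]
  · rw [(effRes_eq_top_iff G u v).2 h, (effRes_eq_top_iff G v u).2 fun h' => h h'.symm]

variable (G) in
lemma effRes_self (u : V) : effRes G u u = 0 := by
  have h0 : G.lapMatrix ℝ *ᵥ 0 = dipole u u := by rw [mulVec_zero, dipole_self]
  rw [effRes_eq_ofReal h0, sub_self, ENNReal.ofReal_zero]

lemma apply_eq_of_lapMatrix_mulVec_eq_zero_on_component {ψ : V → ℝ}
    (hψ : ∀ w, G.Reachable u w → (G.lapMatrix ℝ *ᵥ ψ) w = 0) (huv : G.Reachable u v) :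
    ψ u = ψ v := by
  let χ : V → ℝ := fun w => if G.Reachable u w then ψ w else 0
  have hχ : G.lapMatrix ℝ *ᵥ χ = 0 := by
    funext w
    rw [SimpleGraph.lapMatrix_mulVec_apply, Pi.zero_apply]
    by_cases hw : G.Reachable u w
    · have hnbr : ∀ x ∈ G.neighborFinset w, χ x = ψ x := fun x hx =>
        if_pos (hw.trans ((G.mem_neighborFinset w x).1 hx).reachable)
      rw [Finset.sum_congr rfl hnbr, ← hψ w hw, SimpleGraph.lapMatrix_mulVec_apply]
      simp [χ, hw]
    · have hnbr : ∀ x ∈ G.neighborFinset w, χ x = 0 := fun x hx =>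
        if_neg fun hx' => hw (hx'.trans ((G.mem_neighborFinset w x).1 hx).symm.reachable)
      simp [Finset.sum_congr rfl hnbr, χ, hw]
  have := (SimpleGraph.lapMatrix_mulVec_eq_zero_iff_forall_reachable G).1 hχ u v huv
  simpa [χ, huv] using this

lemma apply_eq_of_lapMatrix_mulVec_eq_dipole_of_not_reachable {ψ : V → ℝ} {a b : V}
    (hψ : G.lapMatrix ℝ *ᵥ ψ = dipole a b) (hau : ¬ G.Reachable a u) (huv : G.Reachable u v) :
    ψ u = ψ v := by
  refine apply_eq_of_lapMatrix_mulVec_eq_zero_on_component (fun w huw => ?_) huv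
  have hwa : w ≠ a := by rintro rfl; exact hau huw.symm
  have hwb : w ≠ b := by
    rintro rfl; exact hau ((reachable_of_lapMatrix_mulVec_eq_dipole hψ).trans huw.symm)
  simp [hψ, dipole, hwa, hwb]

/-- Reciprocity with a potential `φ` of `(x, a)`, where `φ + ψ` is a potential of `(x, b)`. -/
lemma two_mul_sub_eq_toReal_effRes_sub {ψ : V → ℝ} {a b x : V}
    (hψ : G.lapMatrix ℝ *ᵥ ψ = dipole a b) (hx : G.Reachable a x) :
    2 * ψ x - ψ a - ψ b = (effRes G x b).toReal - (effRes G x a).toReal := by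
  obtain ⟨φ, hφ⟩ := exists_lapMatrix_mulVec_eq_dipole hx.symm
  have hφψ : G.lapMatrix ℝ *ᵥ (φ + ψ) = dipole x b := by
    rw [mulVec_add, hφ, hψ, dipole_add_dipole]
  have hrecip := sub_eq_sub_of_lapMatrix_mulVec_eq_dipole hφ hψ
  rw [toReal_effRes hφψ, toReal_effRes hφ, Pi.add_apply, Pi.add_apply]
  linarith

section Reconstruction

variable {G₁ G₂ : SimpleGraph V}

lemma reachable_iff_of_effRes_eq (heff : ∀ u v, effRes G₁ u v = effRes G₂ u v) (u v : V) :
    G₁.Reachable u v ↔ G₂.Reachable u v := by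
  rw [← not_iff_not, ← effRes_eq_top_iff, ← effRes_eq_top_iff, heff]

lemma lapMatrix_mulVec_eq_dipole_of_effRes_eq (heff : ∀ u v, effRes G₁ u v = effRes G₂ u v)
    {ψ : V → ℝ} {a b : V} (hψ : G₁.lapMatrix ℝ *ᵥ ψ = dipole a b) :
    G₂.lapMatrix ℝ *ᵥ ψ = dipole a b := by
  have hreach := reachable_iff_of_effRes_eq heff
  obtain ⟨ψ₂, hψ₂⟩ := exists_lapMatrix_mulVec_eq_dipole
    ((hreach a b).1 (reachable_of_lapMatrix_mulVec_eq_dipole hψ))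
  suffices G₂.lapMatrix ℝ *ᵥ (ψ - ψ₂) = 0 by rwa [mulVec_sub, hψ₂, sub_eq_zero] at this
  refine (SimpleGraph.lapMatrix_mulVec_eq_zero_iff_forall_reachable G₂).2 fun u v huv => ?_
  rw [Pi.sub_apply, Pi.sub_apply, sub_eq_sub_iff_sub_eq_sub]
  by_cases hau : G₂.Reachable a u
  · have h₁u := two_mul_sub_eq_toReal_effRes_sub hψ ((hreach a u).2 hau)
    have h₁v := two_mul_sub_eq_toReal_effRes_sub hψ ((hreach a v).2 (hau.trans huv))
    have h₂u := two_mul_sub_eq_toReal_effRes_sub hψ₂ hau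
    have h₂v := two_mul_sub_eq_toReal_effRes_sub hψ₂ (hau.trans huv)
    rw [heff, heff] at h₁u h₁v
    linarith
  · rw [apply_eq_of_lapMatrix_mulVec_eq_dipole_of_not_reachable hψ (mt (hreach a u).1 hau)
        ((hreach u v).2 huv),
      apply_eq_of_lapMatrix_mulVec_eq_dipole_of_not_reachable hψ₂ hau huv, sub_self, sub_self]

/-- `D := (L₁ - L₂) y` is orthogonal to the common kernel, so `D = L₁ w`; pairing `D` with the
common potentials shows `w ∈ ker L₁`. -/
lemma lapMatrix_eq_of_effRes_eq (heff : ∀ u v, effRes G₁ u v = effRes G₂ u v) :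
    G₁.lapMatrix ℝ = G₂.lapMatrix ℝ := by
  have hker : ∀ k, G₁.lapMatrix ℝ *ᵥ k = 0 → G₂.lapMatrix ℝ *ᵥ k = 0 := fun k hk =>
    (SimpleGraph.lapMatrix_mulVec_eq_zero_iff_forall_reachable G₂).2 fun u v huv =>
      (SimpleGraph.lapMatrix_mulVec_eq_zero_iff_forall_reachable G₁).1 hk u v
        ((reachable_iff_of_effRes_eq heff u v).2 huv)
  refine ext_iff_mulVec.2 fun y => sub_eq_zero.1 ?_
  obtain ⟨w, hw⟩ := exists_lapMatrix_mulVec_eq (G := G₁)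
    (x := G₁.lapMatrix ℝ *ᵥ y - G₂.lapMatrix ℝ *ᵥ y) fun k hk => by
      rw [dotProduct_sub, dotProduct_lapMatrix_mulVec, dotProduct_lapMatrix_mulVec G₂, hk,
        hker k hk, sub_self]
  have hwker : G₁.lapMatrix ℝ *ᵥ w = 0 :=
    (SimpleGraph.lapMatrix_mulVec_eq_zero_iff_forall_reachable G₁).2 fun a b hab => by
      obtain ⟨ψ, hψ⟩ := exists_lapMatrix_mulVec_eq_dipole hab
      have hψ₂ := lapMatrix_mulVec_eq_dipole_of_effRes_eq heff hψ
      rw [← sub_eq_zero]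
      calc w a - w b = w ⬝ᵥ (G₁.lapMatrix ℝ *ᵥ ψ) := by rw [hψ, dotProduct_dipole]
        _ = y ⬝ᵥ (G₁.lapMatrix ℝ *ᵥ ψ) - y ⬝ᵥ (G₂.lapMatrix ℝ *ᵥ ψ) := by
          rw [dotProduct_lapMatrix_mulVec, hw, sub_dotProduct, ← dotProduct_lapMatrix_mulVec,
            ← dotProduct_lapMatrix_mulVec]
        _ = 0 := by rw [hψ, hψ₂, sub_self]
  rw [← hw, hwker]

lemma eq_of_lapMatrix_eq (h : G₁.lapMatrix ℝ = G₂.lapMatrix ℝ) : G₁ = G₂ := by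
  ext a b
  by_cases hab : a = b
  · simp [hab]
  · have := congrFun (congrFun h a) b
    simp only [SimpleGraph.lapMatrix, SimpleGraph.degMatrix, SimpleGraph.adjMatrix_apply,
      Matrix.sub_apply, diagonal_apply_ne _ hab, zero_sub, neg_inj] at this
    split_ifs at this <;> simp_all

theorem eq_of_effRes_eq (heff : ∀ u v, effRes G₁ u v = effRes G₂ u v) : G₁ = G₂ :=
  eq_of_lapMatrix_eq (lapMatrix_eq_of_effRes_eq heff)

lemma div_add_one_lt_one {t : ℝ} (ht : 0 ≤ t) : t / (t + 1) < 1 :=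
  (div_lt_one (by linarith)).2 (by linarith)

lemma injective_renormalize :
    Function.Injective fun x : ℝ≥0∞ => if x = ⊤ then (1 : ℝ) else x.toReal / (x.toReal + 1) := by
  intro x y hxy
  by_cases hx : x = ⊤ <;> by_cases hy : y = ⊤ <;> simp only [hx, hy, if_true, if_false] at hxy
  · rw [hx, hy]
  · exact absurd hxy.symm (div_add_one_lt_one ENNReal.toReal_nonneg).ne
  · exact absurd hxy (div_add_one_lt_one ENNReal.toReal_nonneg).ne
  · have hx0 : 0 ≤ x.toReal := ENNReal.toReal_nonneg
    have hy0 : 0 ≤ y.toReal := ENNReal.toReal_nonneg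
    rw [div_eq_div_iff (by linarith) (by linarith)] at hxy
    exact (ENNReal.toReal_eq_toReal_iff' hx hy).1 (by linarith)

lemma effRes_eq_of_renRes_eq {u v : V} (h : renRes G₁ u v = renRes G₂ u v) :
    effRes G₁ u v = effRes G₂ u v :=
  injective_renormalize h

end Reconstruction

section RD

variable [LinearOrder V] (S : Finset V) (G₁ G₂ G₃ : SimpleGraph V)

lemma RDon_nonneg : 0 ≤ RDon S G₁ G₂ :=
  Finset.sum_nonneg fun _ _ => abs_nonneg _

lemma RDon_self : RDon S G₁ G₁ = 0 := by
  simp [RDon]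

lemma RDon_comm : RDon S G₁ G₂ = RDon S G₂ G₁ :=
  Finset.sum_congr rfl fun _ _ => abs_sub_comm _ _

lemma RDon_triangle : RDon S G₁ G₃ ≤ RDon S G₁ G₂ + RDon S G₂ G₃ := by
  rw [RDon, RDon, RDon, ← Finset.sum_add_distrib]
  exact Finset.sum_le_sum fun _ _ => abs_sub_le _ _ _

variable {G₁ G₂}

lemma eq_of_RD_eq_zero (h : RD G₁ G₂ = 0) : G₁ = G₂ := by
  have hpair : ∀ u v : V, u < v → effRes G₁ u v = effRes G₂ u v := by
    intro u v huv
    have := (Finset.sum_eq_zero_iff_of_nonneg fun _ _ => abs_nonneg _).1 h (u, v) (by simp [huv])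
    exact effRes_eq_of_renRes_eq (sub_eq_zero.1 (abs_eq_zero.1 this))
  refine eq_of_effRes_eq fun u v => ?_
  rcases lt_trichotomy u v with huv | rfl | hvu
  · exact hpair u v huv
  · rw [effRes_self, effRes_self]
  · rw [effRes_comm, effRes_comm G₂, hpair v u hvu]

end RD

end Fintype

/-- `RD` is a metric on the simple graphs over a fixed finite vertex set `V`. -/
theorem RD_is_metric {V : Type*} [Fintype V] [LinearOrder V]
    (G₁ G₂ G₃ : SimpleGraph V) :
    0 ≤ RD G₁ G₂ ∧
    (RD G₁ G₂ = 0 ↔ G₁ = G₂) ∧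
    RD G₁ G₂ = RD G₂ G₁ ∧
    RD G₁ G₃ ≤ RD G₁ G₂ + RD G₂ G₃ :=
  ⟨RDon_nonneg _ _ _, ⟨eq_of_RD_eq_zero, fun h => h ▸ RDon_self _ _⟩, RDon_comm _ _ _,
    RDon_triangle _ _ _ _⟩

end RP
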